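/- Let X be a set and K : X × X → ℂ a bounded function satisfying condition (A1). Assume that for every n, all pairwise distinct x₁, …, xₙ ∈ X, every continuous V : ℂⁿ → [0,∞), every continuous nondecreasing φ : [0,∞) → [0,∞) with lim_{t→∞} φ(t) = ∞, and every μ > 0, there exists c₀ ∈ ℓ¹(X) with support contained in {x₁, …, xₙ} minimizing c ↦ V(Φ(c)(x₁), …, Φ(c)(xₙ)) + μ φ(‖c‖_{ℓ¹(X)}) over ℓ¹(X). Then for every n, all pairwise distinct x₁, …, xₙ ∈ X, every y ∈ ℂⁿ, and every c ∈ ℓ¹(X) with Φ(c)(x_i) = y_i for all i, one has ‖c‖_{ℓ¹(X)} ≥ ‖(K[x])^{-1} y‖₁. -/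

import Mathlib

open Matrix Filter Topology

/-- The kernel matrix `K[x]`, with `(j,k)` entry `K(x_k, x_j)`. -/
noncomputable def kernelMatrix {X : Type*} (K : X → X → ℂ) {n : ℕ} (x : Fin n → X) :
    Matrix (Fin n) (Fin n) ℂ := Matrix.of fun j k => K (x k) (x j)

/-- The `ℓ¹` norm of a vector in `ℂⁿ`. -/
noncomputable def l1norm {n : ℕ} (v : Fin n → ℂ) : ℝ := ∑ j, ‖v j‖

/-- Condition (A1): every kernel matrix at finitely many pairwise distinct points is
nonsingular. -/
def CondA1 {X : Type*} (K : X → X → ℂ) : Prop :=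
  ∀ (n : ℕ) (x : Fin n → X), Function.Injective x → IsUnit (kernelMatrix K x).det

/-- `Φ(c)(x) = ∑_{t ∈ X} c_t K(t, x)` for `c ∈ ℓ¹(X)`. -/
noncomputable def PhiMap {X : Type*} (K : X → X → ℂ) (c : X → ℂ) (x : X) : ℂ :=
  ∑' t, c t * K t x

/-!
The minimal `ℓ¹` norm interpolant is approached by minimisers of penalised problems.
Given an interpolant `c` of `y` with norm `N`, take `V v = r ‖y - v‖₁`, `φ = id`, `μ = 1`.
The minimiser `c₀` is supported on the points, so it is a vector `a` with `Φ(c₀)(xⱼ) = (K[x] a)ⱼ`,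
and comparing it with `c` gives `‖a‖₁ ≤ N` and `‖y - K[x] a‖₁ ≤ N / r`. Hence
`‖K[x]⁻¹ y‖₁ ≤ ‖a‖₁ + C ‖y - K[x] a‖₁ ≤ N + C N / r` with `C` the entrywise `ℓ¹` norm of
`K[x]⁻¹`, and `r → ∞` gives the claim.
-/

section l1norm

variable {n : ℕ}

lemma l1norm_nonneg (v : Fin n → ℂ) : 0 ≤ l1norm v :=
  Finset.sum_nonneg fun _ _ => norm_nonneg _

@[simp]
lemma l1norm_zero : l1norm (0 : Fin n → ℂ) = 0 := by
  simp [l1norm]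

lemma l1norm_add_le (u v : Fin n → ℂ) : l1norm (u + v) ≤ l1norm u + l1norm v := by
  rw [l1norm, l1norm, l1norm, ← Finset.sum_add_distrib]
  exact Finset.sum_le_sum fun j _ => norm_add_le _ _

lemma continuous_l1norm : Continuous (l1norm : (Fin n → ℂ) → ℝ) := by
  unfold l1norm
  fun_prop

lemma l1norm_mulVec_le (B : Matrix (Fin n) (Fin n) ℂ) (w : Fin n → ℂ) :
    l1norm (B *ᵥ w) ≤ (∑ j, ∑ k, ‖B j k‖) * l1norm w := by
  simp only [l1norm, mulVec, dotProduct, Finset.sum_mul]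
  refine Finset.sum_le_sum fun j _ => (norm_sum_le _ _).trans (Finset.sum_le_sum fun k _ => ?_)
  rw [norm_mul]
  gcongr
  exact Finset.single_le_sum (f := fun m => ‖w m‖) (fun m _ => norm_nonneg _) (Finset.mem_univ k)

lemma l1norm_inv_mulVec_le {A : Matrix (Fin n) (Fin n) ℂ} (hA : IsUnit A.det)
    (y a : Fin n → ℂ) :
    l1norm (A⁻¹ *ᵥ y) ≤ l1norm a + (∑ j, ∑ k, ‖A⁻¹ j k‖) * l1norm (y - A *ᵥ a) := by
  have hsplit : A⁻¹ *ᵥ y = a + A⁻¹ *ᵥ (y - A *ᵥ a) := by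
    rw [mulVec_sub, mulVec_mulVec, nonsing_inv_mul A hA, one_mulVec, add_sub_cancel]
  rw [hsplit]
  exact (l1norm_add_le _ _).trans (add_le_add_right (l1norm_mulVec_le _ _) _)

end l1norm

section finiteSupport

variable {X : Type*} {n : ℕ} {x : Fin n → X}

lemma tsum_eq_sum_comp_of_support_subset {E : Type*} [AddCommMonoid E] [TopologicalSpace E]
    (hx : Function.Injective x) {f : X → E} (hf : Function.support f ⊆ Set.range x) :
    ∑' t, f t = ∑ k, f (x k) := by
  classical
  rw [tsum_eq_sum' (s := Finset.univ.image x) (by simpa using hf)]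
  exact Finset.sum_image fun i _ j _ h => hx h

lemma tsum_norm_eq_l1norm_comp (hx : Function.Injective x) {c : X → ℂ}
    (hc : Function.support c ⊆ Set.range x) : ∑' t, ‖c t‖ = l1norm (c ∘ x) :=
  tsum_eq_sum_comp_of_support_subset hx (by simpa using hc)

lemma kernelMatrix_mulVec_comp (K : X → X → ℂ) (hx : Function.Injective x) {c : X → ℂ}
    (hc : Function.support c ⊆ Set.range x) :
    kernelMatrix K x *ᵥ (c ∘ x) = fun j => PhiMap K c (x j) := by
  funext j
  rw [PhiMap, tsum_eq_sum_comp_of_support_subset hx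
    ((Function.support_mul_subset_left _ _).trans hc)]
  show ∑ k, K (x k) (x j) * c (x k) = _
  exact Finset.sum_congr rfl fun k _ => mul_comm _ _

end finiteSupport

def RegularizedRepresenter {X : Type*} (K : X → X → ℂ) {n : ℕ} (x : Fin n → X) : Prop :=
  ∀ V : (Fin n → ℂ) → ℝ, Continuous V → (∀ v, 0 ≤ V v) →
    ∀ φ : ℝ → ℝ, ContinuousOn φ (Set.Ici 0) → MonotoneOn φ (Set.Ici 0) →
      (∀ t ∈ Set.Ici (0 : ℝ), 0 ≤ φ t) → Tendsto φ atTop atTop →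
    ∀ μ : ℝ, 0 < μ →
    ∃ c₀ : X → ℂ, Summable (fun t => ‖c₀ t‖) ∧
      (∀ t, c₀ t ≠ 0 → ∃ i, t = x i) ∧
      ∀ c : X → ℂ, Summable (fun t => ‖c t‖) →
        V (fun i => PhiMap K c₀ (x i)) + μ * φ (∑' t, ‖c₀ t‖) ≤
          V (fun i => PhiMap K c (x i)) + μ * φ (∑' t, ‖c t‖)

lemma RegularizedRepresenter.exists_penalized_approx {X : Type*} {K : X → X → ℂ} {n : ℕ}
    {x : Fin n → X} (hx : Function.Injective x) (hreg : RegularizedRepresenter K x)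
    {y : Fin n → ℂ} {c : X → ℂ} (hc : Summable (fun t => ‖c t‖))
    (hint : ∀ i, PhiMap K c (x i) = y i) {r : ℝ} (hr : 0 < r) :
    ∃ a : Fin n → ℂ, l1norm a ≤ ∑' t, ‖c t‖ ∧
      r * l1norm (y - kernelMatrix K x *ᵥ a) ≤ ∑' t, ‖c t‖ := by
  obtain ⟨c₀, -, hc₀supp, hmin⟩ :=
    hreg (fun v => r * l1norm (y - v)) (continuous_const.mul (continuous_l1norm.comp
      (continuous_const.sub continuous_id))) (fun v => mul_nonneg hr.le (l1norm_nonneg _))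
      id continuousOn_id monotoneOn_id (fun _ ht => ht) tendsto_id 1 one_pos
  have hsupp : Function.support c₀ ⊆ Set.range x := fun t ht =>
    (hc₀supp t ht).imp fun _ hi => hi.symm
  have hcmp := hmin c hc
  have hy : (fun i => PhiMap K c (x i)) = y := funext hint
  simp only [id_eq, one_mul, hy, sub_self, l1norm_zero, mul_zero, zero_add] at hcmp
  rw [← kernelMatrix_mulVec_comp K hx hsupp, tsum_norm_eq_l1norm_comp hx hsupp] at hcmp
  have hres := mul_nonneg hr.le (l1norm_nonneg (y - kernelMatrix K x *ᵥ (c₀ ∘ x)))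
  exact ⟨c₀ ∘ x, by linarith, by linarith [l1norm_nonneg (c₀ ∘ x)]⟩

theorem stmt_8_general {X : Type*} (K : X → X → ℂ) (hA1 : CondA1 K)
    (hreg : ∀ (n : ℕ) (x : Fin n → X), Function.Injective x →
      ∀ V : (Fin n → ℂ) → ℝ, Continuous V → (∀ v, 0 ≤ V v) →
      ∀ φ : ℝ → ℝ, ContinuousOn φ (Set.Ici 0) → MonotoneOn φ (Set.Ici 0) →
        (∀ t ∈ Set.Ici (0 : ℝ), 0 ≤ φ t) → Tendsto φ atTop atTop →
      ∀ μ : ℝ, 0 < μ →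
      ∃ c₀ : X → ℂ, Summable (fun t => ‖c₀ t‖) ∧
        (∀ t, c₀ t ≠ 0 → ∃ i, t = x i) ∧
        ∀ c : X → ℂ, Summable (fun t => ‖c t‖) →
          V (fun i => PhiMap K c₀ (x i)) + μ * φ (∑' t, ‖c₀ t‖) ≤
            V (fun i => PhiMap K c (x i)) + μ * φ (∑' t, ‖c t‖)) :
    ∀ (n : ℕ) (x : Fin n → X), Function.Injective x → ∀ y : Fin n → ℂ,
      ∀ c : X → ℂ, Summable (fun t => ‖c t‖) →
        (∀ i, PhiMap K c (x i) = y i) →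
        l1norm ((kernelMatrix K x)⁻¹ *ᵥ y) ≤ ∑' t, ‖c t‖ := by
  intro n x hx y c hc hint
  set N := ∑' t, ‖c t‖
  set C := ∑ j, ∑ k, ‖(kernelMatrix K x)⁻¹ j k‖
  have hbound : ∀ r, 0 < r → l1norm ((kernelMatrix K x)⁻¹ *ᵥ y) ≤ N + C * (N / r) := by
    intro r hr
    obtain ⟨a, ha, hres⟩ :=
      RegularizedRepresenter.exists_penalized_approx hx (hreg n x hx) hc hint hr
    calc l1norm ((kernelMatrix K x)⁻¹ *ᵥ y)
        ≤ l1norm a + C * l1norm (y - kernelMatrix K x *ᵥ a) :=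
          l1norm_inv_mulVec_le (hA1 n x hx) y a
      _ ≤ N + C * (N / r) := by
          gcongr
          rwa [le_div_iff₀ hr, mul_comm]
  have hlim : Tendsto (fun r => N + C * (N / r)) atTop (𝓝 N) := by
    simpa using tendsto_const_nhds.add
      (tendsto_const_nhds.mul (tendsto_const_nhds.div_atTop tendsto_id) : Tendsto
        (fun r : ℝ => C * (N / r)) atTop (𝓝 (C * 0)))
  exact ge_of_tendsto hlim ((eventually_gt_atTop 0).mono hbound)

theorem stmt_8 {X : Type*} (K : X → X → ℂ) (M : ℝ)
    (hK : ∀ s t, ‖K s t‖ ≤ M) (hA1 : CondA1 K)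
    (hreg : ∀ (n : ℕ) (x : Fin n → X), Function.Injective x →
      ∀ V : (Fin n → ℂ) → ℝ, Continuous V → (∀ v, 0 ≤ V v) →
      ∀ φ : ℝ → ℝ, ContinuousOn φ (Set.Ici 0) → MonotoneOn φ (Set.Ici 0) →
        (∀ t ∈ Set.Ici (0 : ℝ), 0 ≤ φ t) → Tendsto φ atTop atTop →
      ∀ μ : ℝ, 0 < μ →
      ∃ c₀ : X → ℂ, Summable (fun t => ‖c₀ t‖) ∧
        (∀ t, c₀ t ≠ 0 → ∃ i, t = x i) ∧
        ∀ c : X → ℂ, Summable (fun t => ‖c t‖) →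
          V (fun i => PhiMap K c₀ (x i)) + μ * φ (∑' t, ‖c₀ t‖) ≤
            V (fun i => PhiMap K c (x i)) + μ * φ (∑' t, ‖c t‖)) :
    ∀ (n : ℕ) (x : Fin n → X), Function.Injective x → ∀ y : Fin n → ℂ,
      ∀ c : X → ℂ, Summable (fun t => ‖c t‖) →
        (∀ i, PhiMap K c (x i) = y i) →
        l1norm ((kernelMatrix K x)⁻¹ *ᵥ y) ≤ ∑' t, ‖c t‖ :=
  stmt_8_general K hA1 hreg
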